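/- The proximity operator of the OWL norm preserves signs: prox_{Ω_w}(v) = sign(v) ⊙ prox_{Ω_w}(|v|), where ⊙ is the entry-wise product. -/

import Mathlib

open Finset

/-- The vector of absolute values of x, sorted in non-increasing order. -/
noncomputable def absSorted {n : ℕ} (x : Fin n → ℝ) : Fin n → ℝ :=
  fun i => |x (Tuple.sort (fun j => -|x j|) i)|

/-- The ordered weighted l1 norm Omega_w(x). -/
noncomputable def owl {n : ℕ} (w x : Fin n → ℝ) : ℝ := ∑ i, w i * absSorted x i

/-- The objective defining the proximity operator of Omega_w at v. -/
noncomputable def proxObj {n : ℕ} (w v x : Fin n → ℝ) : ℝ :=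
  (1 / 2) * ∑ i, (x i - v i) ^ 2 + owl w x

/-!
Write `r = sign(v) ⊙ q`. Flipping signs coordinatewise does not change `Ω_w`, so
`F_v(r) ≤ F_{|v|}(q) ≤ F_{|v|}(|p|) ≤ F_v(p)`, where `F_v` is the prox objective at `v`; hence `r`
is a minimiser of `F_v` as well as `p`. By the rearrangement inequality, `Ω_w(x)` is the largest
of the sums `∑ w_i |x_{π i}|` over permutations `π`, so it is convex and monotone in `|x|`, and
`F_v` is strictly convex: its minimiser is unique, so `p = r`.
-/

theorem sq_sign_mul_sub_le (a b : ℝ) : (Real.sign a * b - a) ^ 2 ≤ (b - |a|) ^ 2 := by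
  rcases lt_trichotomy a 0 with ha | rfl | ha
  · rw [Real.sign_of_neg ha, abs_of_neg ha]; nlinarith
  · simpa using sq_nonneg b
  · rw [Real.sign_of_pos ha, abs_of_pos ha, one_mul]

theorem abs_sign_mul_le (a b : ℝ) : |Real.sign a * b| ≤ |b| := by
  rcases lt_trichotomy a 0 with ha | rfl | ha
  · simp [Real.sign_of_neg ha]
  · simp
  · simp [Real.sign_of_pos ha]

section Owl

variable {n : ℕ} {w : Fin n → ℝ}

theorem antitone_absSorted (x : Fin n → ℝ) : Antitone (absSorted x) := fun _ _ hij => by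
  simpa [absSorted] using Tuple.monotone_sort (fun j => -|x j|) hij

theorem owl_eq_sum_mul_abs_comp_sort (w x : Fin n → ℝ) :
    owl w x = ∑ i, w i * |x (Tuple.sort (fun j => -|x j|) i)| := rfl

theorem sum_mul_abs_comp_perm_le_owl (hmono : Antitone w) (x : Fin n → ℝ)
    (π : Equiv.Perm (Fin n)) : ∑ i, w i * |x (π i)| ≤ owl w x := by
  set σ := Tuple.sort (fun j => -|x j|)
  have hπ : ∀ i, |x (π i)| = absSorted x ((π.trans σ.symm) i) := fun i => by
    simp [absSorted, σ]
  simp only [hπ]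
  exact (hmono.monovary (antitone_absSorted x)).sum_mul_comp_perm_le_sum_mul

theorem owl_abs (w x : Fin n → ℝ) : owl w (fun i => |x i|) = owl w x := by
  simp only [owl, absSorted, abs_abs]

theorem owl_le_owl_of_abs_le (hmono : Antitone w) (hnonneg : ∀ i, 0 ≤ w i)
    {x y : Fin n → ℝ} (hxy : ∀ i, |x i| ≤ |y i|) : owl w x ≤ owl w y := by
  rw [owl_eq_sum_mul_abs_comp_sort]
  calc _ ≤ ∑ i, w i * |y (Tuple.sort (fun j => -|x j|) i)| :=
        sum_le_sum fun i _ => mul_le_mul_of_nonneg_left (hxy _) (hnonneg i)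
    _ ≤ owl w y := sum_mul_abs_comp_perm_le_owl hmono y _

theorem convexOn_owl (hmono : Antitone w) (hnonneg : ∀ i, 0 ≤ w i) :
    ConvexOn ℝ Set.univ (owl w) := by
  refine ⟨convex_univ, fun x _ y _ a b ha hb hab => ?_⟩
  set σ := Tuple.sort (fun j => -|(a • x + b • y) j|)
  have hterm : ∀ i, w i * |(a • x + b • y) (σ i)| ≤
      a * (w i * |x (σ i)|) + b * (w i * |y (σ i)|) := fun i => by
    have := abs_add_le (a * x (σ i)) (b * y (σ i))
    rw [abs_mul, abs_mul, abs_of_nonneg ha, abs_of_nonneg hb] at this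
    simp only [Pi.add_apply, Pi.smul_apply, smul_eq_mul]
    linarith [mul_le_mul_of_nonneg_left this (hnonneg i)]
  calc owl w (a • x + b • y)
      ≤ a * ∑ i, w i * |x (σ i)| + b * ∑ i, w i * |y (σ i)| := by
        rw [owl_eq_sum_mul_abs_comp_sort, mul_sum, mul_sum, ← sum_add_distrib]
        exact sum_le_sum fun i _ => hterm i
    _ ≤ a • owl w x + b • owl w y := by
        simp only [smul_eq_mul]
        gcongr <;> exact sum_mul_abs_comp_perm_le_owl hmono _ σ

end Owl

section ProxObj

variable {n : ℕ}

theorem strictConvexOn_half_sum_sq_sub (v : Fin n → ℝ) :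
    StrictConvexOn ℝ Set.univ fun x : Fin n → ℝ => (1 / 2) * ∑ i, (x i - v i) ^ 2 := by
  refine ⟨convex_univ, fun x _ y _ hxy a b ha hb hab => ?_⟩
  obtain ⟨k, hk⟩ := Function.ne_iff.mp hxy
  have hgap : 0 < ∑ i, (x i - y i) ^ 2 :=
    sum_pos' (fun i _ => sq_nonneg _) ⟨k, mem_univ k, pow_two_pos_of_ne_zero (sub_ne_zero.mpr hk)⟩
  obtain rfl : b = 1 - a := by linarith
  have hsum : a * ∑ i, (x i - v i) ^ 2 + (1 - a) * ∑ i, (y i - v i) ^ 2 =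
      ∑ i, ((a • x + (1 - a) • y) i - v i) ^ 2 + a * (1 - a) * ∑ i, (x i - y i) ^ 2 := by
    simp only [mul_sum, ← sum_add_distrib, Pi.add_apply, Pi.smul_apply, smul_eq_mul]
    exact sum_congr rfl fun i _ => by ring
  simp only [smul_eq_mul]
  nlinarith [mul_pos (mul_pos ha hb) hgap]

theorem strictConvexOn_proxObj {w : Fin n → ℝ} (hmono : Antitone w) (hnonneg : ∀ i, 0 ≤ w i)
    (v : Fin n → ℝ) : StrictConvexOn ℝ Set.univ (proxObj w v) :=
  (strictConvexOn_half_sum_sq_sub v).add_convexOn (convexOn_owl hmono hnonneg)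

theorem proxObj_abs_le (w v p : Fin n → ℝ) :
    proxObj w (fun i => |v i|) (fun i => |p i|) ≤ proxObj w v p := by
  rw [proxObj, proxObj, owl_abs]
  refine add_le_add_left (mul_le_mul_of_nonneg_left (sum_le_sum fun i _ => ?_) (by norm_num)) _
  exact sq_le_sq.mpr (abs_abs_sub_abs_le_abs_sub _ _)

theorem proxObj_sign_mul_le {w : Fin n → ℝ} (hmono : Antitone w) (hnonneg : ∀ i, 0 ≤ w i)
    (v q : Fin n → ℝ) :
    proxObj w v (fun i => Real.sign (v i) * q i) ≤ proxObj w (fun i => |v i|) q := by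
  unfold proxObj
  gcongr ?_ + ?_
  · exact mul_le_mul_of_nonneg_left (sum_le_sum fun i _ => sq_sign_mul_sub_le _ _) (by norm_num)
  · exact owl_le_owl_of_abs_le hmono hnonneg fun i => abs_sign_mul_le _ _

end ProxObj

/-- The proximity operator of the OWL norm preserves signs:
prox(v) = sign(v) ⊙ prox(|v|). -/
theorem owl_prox_sign {n : ℕ} (w : Fin n → ℝ) (hmono : Antitone w)
    (hnonneg : ∀ i, 0 ≤ w i) (v p q : Fin n → ℝ)
    (hp : ∀ x, proxObj w v p ≤ proxObj w v x)
    (hq : ∀ x, proxObj w (fun i => |v i|) q ≤ proxObj w (fun i => |v i|) x) :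
    p = fun i => Real.sign (v i) * q i := by
  have hr : ∀ x, proxObj w v (fun i => Real.sign (v i) * q i) ≤ proxObj w v x := fun x =>
    calc _ ≤ proxObj w (fun i => |v i|) q := proxObj_sign_mul_le hmono hnonneg v q
      _ ≤ proxObj w (fun i => |v i|) (fun i => |p i|) := hq _
      _ ≤ proxObj w v p := proxObj_abs_le w v p
      _ ≤ proxObj w v x := hp x
  exact (strictConvexOn_proxObj hmono hnonneg v).eq_of_isMinOn (isMinOn_univ_iff.mpr hp)
    (isMinOn_univ_iff.mpr hr) trivial trivial
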